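/- The 2D kernel matrix K ∈ ℝ^{NM×NM} with blocks K_{i,j} = λ_2^{|i-j|} K_0, where K_0 ∈ ℝ^{N×N} has entries (K_0)_{kl} = λ_1^{|k-l|} and λ_1, λ_2 ∈ (0,1), belongs to 𝒞^{N,M} with block ratio vectors r^L_i = λ_2·1_N and r^U_i = λ_2·1_N. -/

import Mathlib

open Matrix Finset

/-- `A` is an L-CoLT matrix with ratio vector `r` (0-indexed; `r` has `N-1` meaningful
nonzero entries): `A (i+1) j = r i * A i j` for `j ≤ i`, and `A i j = 0` for `i < j`. -/
def IsLCoLT {N : ℕ} (A : Matrix (Fin N) (Fin N) ℝ) (r : ℕ → ℝ) : Prop :=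
  (∀ k, k + 1 < N → r k ≠ 0) ∧
  (∀ i i' j : Fin N, (i' : ℕ) = (i : ℕ) + 1 → (j : ℕ) ≤ (i : ℕ) → A i' j = r i * A i j) ∧
  (∀ i j : Fin N, (i : ℕ) < (j : ℕ) → A i j = 0)

/-- `A` is a U-CoLT matrix with ratio vector `r'` (0-indexed; `r'` has `N-2` meaningful
nonzero entries): `A (i-1) j = r' (i-1) * A i j` for `i < j`, and `A i j = 0` for `j ≤ i`. -/
def IsUCoLT {N : ℕ} (A : Matrix (Fin N) (Fin N) ℝ) (r' : ℕ → ℝ) : Prop :=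
  (∀ k, k + 2 < N → r' k ≠ 0) ∧
  (∀ i i' j : Fin N, (i : ℕ) = (i' : ℕ) + 1 → (i : ℕ) < (j : ℕ) → A i' j = r' i' * A i j) ∧
  (∀ i j : Fin N, (j : ℕ) ≤ (i : ℕ) → A i j = 0)

/-- The set 𝒞^N: sums of an L-CoLT and a U-CoLT matrix. -/
def InCN {N : ℕ} (M : Matrix (Fin N) (Fin N) ℝ) : Prop :=
  ∃ A B : Matrix (Fin N) (Fin N) ℝ,
    (∃ r, IsLCoLT A r) ∧ (∃ r', IsUCoLT B r') ∧ M = A + B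

/-- The block set 𝒞^{N,M}: an MN×MN block matrix (indexed by Fin M × Fin N, first
component the block index) whose diagonal blocks lie in 𝒞^N and whose blocks satisfy
A_{i+1,j} = diag(r^L_i) A_{i,j} for j ≤ i and A_{i-1,j} = diag(r^U_{i-1}) A_{i,j} for
i ≤ j, with the block ratio vectors r^L, r^U ∈ (ℝ\{0})^{(M-1)N}. -/
def IsBlockCoLT {N M : ℕ} (A : Matrix (Fin M × Fin N) (Fin M × Fin N) ℝ)
    (rL rU : ℕ → Fin N → ℝ) : Prop :=
  (∀ k : Fin M, InCN ((fun a b => A (k, a) (k, b)) : Matrix (Fin N) (Fin N) ℝ)) ∧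
  (∀ k, k + 1 < M → ∀ a, rL k a ≠ 0) ∧
  (∀ k, k + 1 < M → ∀ a, rU k a ≠ 0) ∧
  (∀ i i' j : Fin M, (i' : ℕ) = (i : ℕ) + 1 → (j : ℕ) ≤ (i : ℕ) → ∀ a b : Fin N,
    A (i', a) (j, b) = rL (i : ℕ) a * A (i, a) (j, b)) ∧
  (∀ i i' j : Fin M, (i : ℕ) = (i' : ℕ) + 1 → (i : ℕ) ≤ (j : ℕ) → ∀ a b : Fin N,
    A (i', a) (j, b) = rU (i' : ℕ) a * A (i, a) (j, b))

/-!
The kernel is the Kronecker product `λ₂^|i-j| ⊗ K₀`. Moving the block row index one step away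
from the block column index multiplies the block by `λ₂`, which gives both block ratio
conditions with constant ratio `λ₂`, and every diagonal block equals `K₀`. Finally
`K₀ = λ₁^|k-l|` splits into its lower part `λ₁^(k-l)` (for `l ≤ k`) and its strictly upper part,
which are L-CoLT and U-CoLT with constant ratio `λ₁`.
-/

namespace Nat

theorem dist_succ_left_of_le {i j : ℕ} (h : j ≤ i) : dist (i + 1) j = dist i j + 1 := by
  unfold dist; omega

theorem dist_eq_dist_succ_left_add_one_of_lt {i j : ℕ} (h : i < j) :
    dist i j = dist (i + 1) j + 1 := by
  unfold dist; omega

end Nat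

section ExpToeplitz

variable {N : ℕ} (lam : ℝ)

def expLowerPart : Matrix (Fin N) (Fin N) ℝ :=
  of fun a b => if (b : ℕ) ≤ a then lam ^ ((a : ℕ) - b) else 0

def expUpperPart : Matrix (Fin N) (Fin N) ℝ :=
  of fun a b => if (a : ℕ) < b then lam ^ ((b : ℕ) - a) else 0

variable {lam}

theorem isLCoLT_expLowerPart (hlam : lam ≠ 0) :
    IsLCoLT (expLowerPart (N := N) lam) fun _ => lam := by
  refine ⟨fun _ _ => hlam, fun i i' j hi hj => ?_, fun i j hij => if_neg (by omega)⟩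
  rw [expLowerPart, of_apply, of_apply, if_pos (by omega), if_pos hj,
    show (i' : ℕ) - j = (i - j : ℕ) + 1 by omega, pow_succ']

theorem isUCoLT_expUpperPart (hlam : lam ≠ 0) :
    IsUCoLT (expUpperPart (N := N) lam) fun _ => lam := by
  refine ⟨fun _ _ => hlam, fun i i' j hi hj => ?_, fun i j hij => if_neg (by omega)⟩
  rw [expUpperPart, of_apply, of_apply, if_pos (by omega), if_pos hj,
    show (j : ℕ) - i' = (j - i : ℕ) + 1 by omega, pow_succ']

theorem expLowerPart_add_expUpperPart :
    expLowerPart lam + expUpperPart lam =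
      of fun a b : Fin N => lam ^ Nat.dist a b := by
  ext a b
  rw [Matrix.add_apply, expLowerPart, expUpperPart, of_apply, of_apply, of_apply]
  rcases le_or_gt (b : ℕ) a with h | h
  · rw [if_pos h, if_neg h.not_gt, add_zero, Nat.dist_eq_sub_of_le_right h]
  · rw [if_neg h.not_ge, if_pos h, zero_add, Nat.dist_eq_sub_of_le h.le]

theorem inCN_pow_dist (hlam : lam ≠ 0) :
    InCN (of fun a b : Fin N => lam ^ Nat.dist a b) :=
  ⟨_, _, ⟨_, isLCoLT_expLowerPart hlam⟩, ⟨_, isUCoLT_expUpperPart hlam⟩,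
    expLowerPart_add_expUpperPart.symm⟩

end ExpToeplitz

theorem isBlockCoLT_pow_dist_mul {N M : ℕ} {lam : ℝ} (hlam : lam ≠ 0)
    {K : Matrix (Fin N) (Fin N) ℝ} (hK : InCN K) :
    IsBlockCoLT
      (fun p q => lam ^ Nat.dist p.1 q.1 * K p.2 q.2 : Matrix (Fin M × Fin N) (Fin M × Fin N) ℝ)
      (fun _ _ => lam) (fun _ _ => lam) := by
  refine ⟨fun k => ?_, fun _ _ _ => hlam, fun _ _ _ => hlam, ?_, ?_⟩
  · simpa [Nat.dist_self] using hK
  · intro i i' j hi hj a b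
    dsimp only
    rw [hi, Nat.dist_succ_left_of_le hj, pow_succ']
    ring
  · intro i i' j hi hj a b
    dsimp only
    rw [Nat.dist_eq_dist_succ_left_add_one_of_lt (by omega), ← hi, pow_succ']
    ring

theorem stmt18 {N M : ℕ} (lam1 lam2 : ℝ)
    (h1 : 0 < lam1) (h2 : 0 < lam2) :
    IsBlockCoLT
      ((fun p q =>
          lam2 ^ (((p.1 : ℕ) - (q.1 : ℕ)) + ((q.1 : ℕ) - (p.1 : ℕ))) *
          lam1 ^ (((p.2 : ℕ) - (q.2 : ℕ)) + ((q.2 : ℕ) - (p.2 : ℕ)))) :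
        Matrix (Fin M × Fin N) (Fin M × Fin N) ℝ)
      (fun _ _ => lam2) (fun _ _ => lam2) :=
  -- `Nat.dist n m` unfolds to `n - m + (m - n)`, the exponents written above.
  isBlockCoLT_pow_dist_mul h2.ne' (inCN_pow_dist h1.ne')
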